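/- Along any solution of F̈ᵢₖ + ∂U/∂Fᵢₖ + 2ω(LḞ)ᵢₖ − ω²Fᵢₖ = 0, with K = F₁₁Ḟ₁₂ + F₂₁Ḟ₂₂ − F₁₂Ḟ₁₁ − F₂₂Ḟ₂₁, the quantity B = K − 2ω det F is constant in time. -/

import Mathlib

/-!
The quantity `K` is the antisymmetric part `(Fᵀ Ḟ)₀₁ - (Fᵀ Ḟ)₁₀` of `Fᵀ Ḟ`, and its derivative is
the same expression in `F` and `F̈`. Substituting `F̈` from the equation of motion, the
potential force is a multiple of the cofactor matrix `(adj F)ᵀ` and the centrifugal force a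
multiple of `F`; both contribute nothing since `Fᵀ (adj F)ᵀ = det F • 1` and `Fᵀ F` are
symmetric. The Coriolis force `2ω L Ḟ` contributes `2ω tr (adj F Ḟ)`, which by Jacobi's
formula is `2ω (det F)˙`.
-/

open Matrix
attribute [local instance] Matrix.normedAddCommGroup Matrix.normedSpace

namespace Matrix

variable {F G : ℝ → Matrix (Fin 2) (Fin 2) ℝ} {F' G' : Matrix (Fin 2) (Fin 2) ℝ} {t : ℝ}

theorem _root_.HasDerivAt.matrix_apply {m n : Type*} [Fintype m] [Fintype n]
    {F : ℝ → Matrix m n ℝ} {F' : Matrix m n ℝ} (hF : HasDerivAt F F' t) (i : m) (j : n) :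
    HasDerivAt (fun s => F s i j) (F' i j) t :=
  hasDerivAt_pi.1 (hasDerivAt_pi.1 hF i) j

theorem hasDerivAt_det_fin_two (hF : HasDerivAt F F' t) :
    HasDerivAt (fun s => (F s).det) (trace (adjugate (F t) * F')) t := by
  simp only [det_fin_two]
  refine (((hF.matrix_apply 0 0).mul (hF.matrix_apply 1 1)).sub
    ((hF.matrix_apply 0 1).mul (hF.matrix_apply 1 0))).congr_deriv ?_
  simp only [adjugate_fin_two, trace_fin_two, mul_apply, Fin.sum_univ_two, of_apply, cons_val',
    cons_val_zero, cons_val_one, cons_val_fin_one]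
  ring

theorem transpose_adjugate_fin_two {α : Type*} [CommRing α] (A : Matrix (Fin 2) (Fin 2) α) :
    (adjugate A)ᵀ = !![A 1 1, -(A 1 0); -(A 0 1), A 0 0] := by
  rw [adjugate_fin_two]
  ext i j
  fin_cases i <;> fin_cases j <;> rfl

def angularMomentum (A V : Matrix (Fin 2) (Fin 2) ℝ) : ℝ :=
  (Aᵀ * V) 0 1 - (Aᵀ * V) 1 0

theorem angularMomentum_sub_right (A V W : Matrix (Fin 2) (Fin 2) ℝ) :
    angularMomentum A (V - W) = angularMomentum A V - angularMomentum A W := by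
  simp only [angularMomentum, Matrix.mul_sub, sub_apply]
  ring

theorem angularMomentum_smul_right (A V : Matrix (Fin 2) (Fin 2) ℝ) (c : ℝ) :
    angularMomentum A (c • V) = c * angularMomentum A V := by
  simp only [angularMomentum, Matrix.mul_smul, smul_apply, smul_eq_mul]
  ring

theorem angularMomentum_self (A : Matrix (Fin 2) (Fin 2) ℝ) : angularMomentum A A = 0 := by
  simp only [angularMomentum, mul_apply, transpose_apply, Fin.sum_univ_two]
  ring

theorem angularMomentum_adjugate_transpose (A : Matrix (Fin 2) (Fin 2) ℝ) :
    angularMomentum A (adjugate A)ᵀ = 0 := by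
  simp [angularMomentum, ← transpose_mul, adjugate_mul]

theorem angularMomentum_rotation_mul (A V : Matrix (Fin 2) (Fin 2) ℝ) :
    angularMomentum A (!![0, -1; 1, 0] * V) = -trace (adjugate A * V) := by
  simp only [angularMomentum, adjugate_fin_two, trace_fin_two, mul_apply, transpose_apply,
    Fin.sum_univ_two, of_apply, cons_val', cons_val_zero, cons_val_one, cons_val_fin_one]
  ring

theorem hasDerivAt_angularMomentum (hF : HasDerivAt F F' t) (hG : HasDerivAt G G' t) :
    HasDerivAt (fun s => angularMomentum (F s) (G s))
      (angularMomentum F' (G t) + angularMomentum (F t) G') t := by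
  simp only [angularMomentum, mul_apply, transpose_apply, Fin.sum_univ_two]
  refine ((((hF.matrix_apply 0 0).mul (hG.matrix_apply 0 1)).add
    ((hF.matrix_apply 1 0).mul (hG.matrix_apply 1 1))).sub
    (((hF.matrix_apply 0 1).mul (hG.matrix_apply 0 0)).add
    ((hF.matrix_apply 1 1).mul (hG.matrix_apply 1 0)))).congr_deriv ?_
  ring

theorem angularMomentum_eq_of_equation_of_motion {A V W : Matrix (Fin 2) (Fin 2) ℝ} {c ω : ℝ}
    (h : W + c • (adjugate A)ᵀ + (2 * ω) • (!![0, -1; 1, 0] * V) - ω ^ 2 • A = 0) :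
    angularMomentum A W = 2 * ω * trace (adjugate A * V) := by
  have hW : W = ω ^ 2 • A - c • (adjugate A)ᵀ - (2 * ω) • (!![0, -1; 1, 0] * V) := by
    linear_combination (norm := module) h
  rw [hW, angularMomentum_sub_right, angularMomentum_sub_right, angularMomentum_smul_right,
    angularMomentum_smul_right, angularMomentum_smul_right, angularMomentum_self,
    angularMomentum_adjugate_transpose, angularMomentum_rotation_mul]
  ring

end Matrix

theorem first_integral_B_general (U₀ γ ω : ℝ)
    (F F' F'' : ℝ → Matrix (Fin 2) (Fin 2) ℝ)
    (hF : ∀ t, HasDerivAt F (F' t) t)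
    (hF' : ∀ t, HasDerivAt F' (F'' t) t)
    (hode : ∀ t : ℝ,
      F'' t + (U₀ * (1 - γ) * (F t).det ^ (-γ)) •
          !![F t 1 1, -(F t 1 0); -(F t 0 1), F t 0 0] +
        (2 * ω) • (!![0, -1; 1, 0] * F' t) - ω ^ 2 • F t = 0) :
    let K : ℝ → ℝ := fun t =>
      F t 0 0 * F' t 0 1 + F t 1 0 * F' t 1 1 - F t 0 1 * F' t 0 0 - F t 1 1 * F' t 1 0
    ∀ t₁ t₂ : ℝ,
      K t₁ - 2 * ω * (F t₁).det = K t₂ - 2 * ω * (F t₂).det := by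
  intro K
  have hK : ∀ t, K t = angularMomentum (F t) (F' t) := fun t => by
    simp only [K, angularMomentum, mul_apply, transpose_apply, Fin.sum_univ_two]
    ring
  have hB : ∀ t, HasDerivAt (fun s => K s - 2 * ω * (F s).det) 0 t := fun t => by
    simp only [hK]
    have hK' := hasDerivAt_angularMomentum (hF t) (hF' t)
    rw [angularMomentum_self, zero_add,
      angularMomentum_eq_of_equation_of_motion (transpose_adjugate_fin_two (F t) ▸ hode t)] at hK'
    exact (hK'.sub ((hasDerivAt_det_fin_two (hF t)).const_mul (2 * ω))).congr_deriv (sub_self _)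
  intro t₁ t₂
  exact is_const_of_deriv_eq_zero (fun t => (hB t).differentiableAt) (fun t => (hB t).deriv) t₁ t₂

/-- Along any solution of `F̈ᵢₖ + ∂U/∂Fᵢₖ + 2ω(LḞ)ᵢₖ − ω²Fᵢₖ = 0` (case `δ = 1`,
`k = 1`, `l = 2ω`, `U = U₀(det F)^(1−γ)`), with
`K = F₁₁Ḟ₁₂ + F₂₁Ḟ₂₂ − F₁₂Ḟ₁₁ − F₂₂Ḟ₂₁`, the quantity `B = K − 2ω det F` is
constant in time. -/
theorem first_integral_B (U₀ γ ω : ℝ) (hU₀ : 0 < U₀) (hγ : 1 < γ)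
    (F F' F'' : ℝ → Matrix (Fin 2) (Fin 2) ℝ)
    (hdet : ∀ t, 0 < (F t).det)
    (hF : ∀ t, HasDerivAt F (F' t) t)
    (hF' : ∀ t, HasDerivAt F' (F'' t) t)
    (hode : ∀ t : ℝ,
      F'' t + (U₀ * (1 - γ) * (F t).det ^ (-γ)) •
          !![F t 1 1, -(F t 1 0); -(F t 0 1), F t 0 0] +
        (2 * ω) • (!![0, -1; 1, 0] * F' t) - ω ^ 2 • F t = 0) :
    let K : ℝ → ℝ := fun t =>
      F t 0 0 * F' t 0 1 + F t 1 0 * F' t 1 1 - F t 0 1 * F' t 0 0 - F t 1 1 * F' t 1 0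
    ∀ t₁ t₂ : ℝ,
      K t₁ - 2 * ω * (F t₁).det = K t₂ - 2 * ω * (F t₂).det :=
  first_integral_B_general U₀ γ ω F F' F'' hF hF' hode
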